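/- The Conrad filter N of an MV-algebra L (the implication filter generated by all counits) is itself a prime filter whenever it is proper: if a ∨ b = 1 with a, b < 1 then both a and b are counits, hence in N; consequently a ∨ b ∈ N implies a ∈ N or b ∈ N. -/

import Mathlib

/-- An MV-algebra `(α, ⊕, ¬, 0)` with the standard axioms. -/
class MV (α : Type*) extends Add α, Neg α, Zero α where
  add_assoc : ∀ a b c : α, a + (b + c) = (a + b) + c
  add_comm : ∀ a b : α, a + b = b + a
  add_zero : ∀ a : α, a + 0 = a
  neg_neg : ∀ a : α, - -a = a
  add_neg_zero : ∀ a : α, a + -(0 : α) = -(0 : α)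
  luk : ∀ a b : α, -(-a + b) + b = -(-b + a) + a

namespace MV

variable {α : Type*} [MV α]

/-- The top element `1 = ¬0`. -/
def one (α : Type*) [MV α] : α := -(0 : α)

/-- Implication `x → y = ¬x ⊕ y`. -/
def imp (a b : α) : α := -a + b

/-- Strong conjunction `x ⊗ y = ¬(¬x ⊕ ¬y)`. -/
def otimes (a b : α) : α := -(-a + -b)

/-- Join `x ∨ y = (x → y) → y`. -/
def sup (a b : α) : α := imp (imp a b) b

/-- Meet `x ∧ y = ¬(¬x ∨ ¬y)`. -/
def inf (a b : α) : α := -(sup (-a) (-b))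

/-- Order: `x ≤ y` iff `x → y = 1`. -/
def le (a b : α) : Prop := imp a b = one α

/-- Strict order. -/
def lt (a b : α) : Prop := le a b ∧ a ≠ b

/-- `n`-fold `⊗`-power. -/
def pow (a : α) : ℕ → α
  | 0 => one α
  | n + 1 => otimes a (pow a n)

/-- An implication filter: a lattice filter closed under `⊗`. -/
def IsImpFilter (F : Set α) : Prop :=
  one α ∈ F ∧ (∀ x ∈ F, ∀ y : α, le x y → y ∈ F) ∧
    (∀ x ∈ F, ∀ y ∈ F, inf x y ∈ F) ∧ (∀ x ∈ F, ∀ y ∈ F, otimes x y ∈ F)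

/-- A prime implication filter: proper and `x ∨ y ∈ F → x ∈ F ∨ y ∈ F`. -/
def IsPrime (F : Set α) : Prop :=
  IsImpFilter F ∧ F ≠ Set.univ ∧ ∀ x y : α, sup x y ∈ F → x ∈ F ∨ y ∈ F

/-- A minimal prime implication filter. -/
def IsMinimalPrime (F : Set α) : Prop :=
  IsPrime F ∧ ∀ G : Set α, IsPrime G → G ⊆ F → G = F

/-- A maximal proper implication filter. -/
def IsMaximal (F : Set α) : Prop :=
  IsImpFilter F ∧ F ≠ Set.univ ∧
    ∀ G : Set α, IsImpFilter G → G ≠ Set.univ → F ⊆ G → G = F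

/-- A counit: `u < 1` joining to `1` with some `v < 1`. -/
def IsCounit (u : α) : Prop :=
  lt u (one α) ∧ ∃ v : α, lt v (one α) ∧ sup u v = one α

/-- The implication filter generated by a set. -/
def gen (S : Set α) : Set α := ⋂₀ {F : Set α | IsImpFilter F ∧ S ⊆ F}

/-- The Conrad filter: the implication filter generated by all counits. -/
def conrad (α : Type*) [MV α] : Set α := gen {u : α | IsCounit u}

/-- The localizing filter `ℓ(P)`, generated by `{x → p : p ∈ P, x ∉ P}`. -/
def locFilter (P : Set α) : Set α :=
  gen {z : α | ∃ x : α, x ∉ P ∧ ∃ p ∈ P, z = imp x p}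

end MV

open MV
/-!
Prelinearity `(a → b) ∨ (b → a) = 1` shows that for incomparable `a`, `b` both `a → b` and
`b → a` are counits. Hence if `a ∨ b = (b → a) → a` lies in an implication filter containing
all counits, either `a` and `b` are comparable and `a ∨ b` is one of them, or `b → a` lies in
the filter and modus ponens yields `a`.
-/

namespace MV

variable {α : Type*} [MV α]

instance toAddCommMonoid : AddCommMonoid α where
  add_assoc a b c := (MV.add_assoc a b c).symm
  add_comm := MV.add_comm
  add_zero := MV.add_zero
  zero_add a := (MV.add_comm 0 a).trans (MV.add_zero a)
  nsmul := nsmulRec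

lemma add_one (a : α) : a + one α = one α := add_neg_zero a

lemma neg_one : -(one α) = (0 : α) := neg_neg 0

lemma neg_add_self (a : α) : -a + a = one α := by
  simpa only [neg_one, zero_add, add_one] using luk (one α) a

lemma le_one (a : α) : le a (one α) := add_neg_zero (-a)

lemma lt_one_iff {a : α} : lt a (one α) ↔ a ≠ one α :=
  ⟨And.right, fun h => ⟨le_one a, h⟩⟩

lemma sup_comm (a b : α) : sup a b = sup b a := luk a b

lemma sup_eq_right {a b : α} (h : le a b) : sup a b = b := by
  change -(imp a b) + b = b
  rw [show imp a b = one α from h, neg_one, zero_add]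

lemma sup_eq_left {a b : α} (h : le b a) : sup a b = a :=
  (sup_comm a b).trans (sup_eq_right h)

lemma le_add_left (a b : α) : le b (a + b) := by
  change -b + (a + b) = one α
  rw [add_left_comm, neg_add_self, add_one]

lemma le_add_right (a b : α) : le a (a + b) :=
  add_comm b a ▸ le_add_left b a

lemma neg_imp_add_add_neg (a b : α) : -(imp (a + b) a) + -b = -a + -b := by
  have hluk : imp (a + b) a = otimes a b + -b := by
    simpa only [imp, otimes, neg_neg, add_comm b a] using (luk a (-b)).symm
  calc -(imp (a + b) a) + -b = sup (-a + -b) (-b) := by rw [hluk, otimes, sup, imp, imp]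
    _ = -a + -b := (sup_comm _ _).trans (sup_eq_right (le_add_left _ _))

/- With `z = (a ⊕ b) ⊙ ¬a` one has `b = (a ⊙ b) ⊕ z` (as `z ≤ b`) and `a ⊕ z = a ∨ (a ⊕ b) = a ⊕ b`. -/
lemma otimes_add_add (a b : α) : otimes a b + (a + b) = a + b := by
  have hle : le (-(imp (a + b) a)) b := by
    change - -(imp (a + b) a) + b = one α
    rw [neg_neg, imp, ← MV.add_assoc, neg_add_self]
  have hb : otimes a b + -(imp (a + b) a) = b := by
    have h : -(-b + -(imp (a + b) a)) + -(imp (a + b) a) = b := sup_eq_left hle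
    rwa [add_comm (-b), neg_imp_add_add_neg] at h
  have ha : -(imp (a + b) a) + a = a + b := sup_eq_left (le_add_right a b)
  calc otimes a b + (a + b) = otimes a b + (-(imp (a + b) a) + a) := congrArg _ ha.symm
    _ = a + (otimes a b + -(imp (a + b) a)) := by ac_rfl
    _ = a + b := by rw [hb]

lemma sup_imp_imp (a b : α) : sup (imp a b) (imp b a) = one α := by
  have h : imp (imp a b) (imp b a) = imp b a := by
    have h := otimes_add_add a (-b)
    rwa [otimes, neg_neg, add_comm a] at h
  rw [sup, h]
  exact neg_add_self _

lemma otimes_imp_le (a b : α) : le (otimes (imp a b) a) b := by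
  change - -(-(imp a b) + -a) + b = one α
  rw [neg_neg, ← MV.add_assoc]
  exact neg_add_self _

lemma isCounit_imp_of_not_le {a b : α} (hab : ¬ le a b) (hba : ¬ le b a) :
    IsCounit (imp b a) :=
  ⟨lt_one_iff.2 hba, imp a b, lt_one_iff.2 hab, (sup_comm _ _).trans (sup_imp_imp a b)⟩

lemma isImpFilter_gen (S : Set α) : IsImpFilter (gen S) :=
  ⟨Set.mem_sInter.2 fun _ hF => hF.1.1,
   fun x hx y hxy => Set.mem_sInter.2 fun F hF =>
     hF.1.2.1 x (Set.mem_sInter.1 hx F hF) y hxy,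
   fun x hx y hy => Set.mem_sInter.2 fun F hF =>
     hF.1.2.2.1 x (Set.mem_sInter.1 hx F hF) y (Set.mem_sInter.1 hy F hF),
   fun x hx y hy => Set.mem_sInter.2 fun F hF =>
     hF.1.2.2.2 x (Set.mem_sInter.1 hx F hF) y (Set.mem_sInter.1 hy F hF)⟩

lemma subset_gen (S : Set α) : S ⊆ gen S :=
  fun _ hx => Set.mem_sInter.2 fun _ hF => hF.2 hx

namespace IsImpFilter

variable {F : Set α}

lemma mem_of_mem_imp (hF : IsImpFilter F) {a b : α} (ha : a ∈ F) (hab : imp a b ∈ F) :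
    b ∈ F :=
  hF.2.1 _ (hF.2.2.2 _ hab _ ha) b (otimes_imp_le a b)

lemma mem_or_mem_of_sup_mem (hF : IsImpFilter F) (hcounit : {u : α | IsCounit u} ⊆ F)
    {a b : α} (hs : sup a b ∈ F) : a ∈ F ∨ b ∈ F := by
  by_cases hab : le a b
  · exact Or.inr (sup_eq_right hab ▸ hs)
  by_cases hba : le b a
  · exact Or.inl (sup_eq_left hba ▸ hs)
  have hmem : imp b a ∈ F := hcounit (isCounit_imp_of_not_le hab hba)
  have hs' : sup b a ∈ F := sup_comm a b ▸ hs
  exact Or.inl (hF.mem_of_mem_imp hmem hs')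

end IsImpFilter

end MV

/-- The Conrad filter is prime whenever it is proper. -/
theorem conrad_prime {α : Type*} [MV α] (h : (0 : α) ∉ conrad α) :
    IsPrime (conrad α) :=
  ⟨isImpFilter_gen _, fun huniv => h (huniv ▸ Set.mem_univ 0),
    fun _ _ => (isImpFilter_gen _).mem_or_mem_of_sup_mem (subset_gen _)⟩
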